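/- Assume μ_1 − λ ≥ ρ_1 > 0, that at least three indices j ∉ C satisfy a_j ∈ S_1, and that for every j ∉ C: if a_j ∈ S_h then ρ_h > ρ_1/2 and a_j ≤ μ_h − λ + ρ_h − ρ_1/2, and if a_j ∈ F_h then a_j ≥ μ_h. Then the PC-lifted cover inequality ∑_{j∈C} x_j + ∑_{j∉C} g_0(a_j) x_j ≤ |C| − 1 is valid for P and defines a facet of conv(P); i.e., it is satisfied by every x ∈ P and there exist n affinely independent points x ∈ P satisfying it with equality. -/

import Mathlib

/-!
Validity. A feasible point takes a set `K` of cover items and a set `U` of other items. The cover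
items outside `K` weigh at most `μ_{t-|K|}`, so `U` weighs at most `μ_s - λ` with `s = t - |K| ≥ 1`,
and such weights carry at most `s - 1` in `g₀`. This goes by induction on `U`: an item of `F_h`
weighs at least `μ_h`, so by subadditivity of `μ` it uses up `h` of the `s` cover slots and has
coefficient `h`; two items of `S_h`, `S_h'` use up `h + h' - 1` slots (here `a₂ + 2λ ≤ 2a₁` is
needed) and have coefficients adding to `h + h' - 1`; a last single item of `S_h` has
coefficient `h - 1/2 < s - 1`.

Facet. A cover item `j` gives the point `C ∖ {j}`, an item of `F_h` the point `{j, h+2, …, t}`,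
and an item of `S_h` the point `{j, q, h+2, …, t}`, where `q ∈ S_1` is a partner whose weight
bound makes the point feasible. Choosing three items of `S_1` and partnering them cyclically,
their coordinates form a block `[[1,x,0],[0,1,y],[z,0,1]]` of determinant `1 + xyz > 0`, every
other non-cover coordinate is met only by its own point, and the cover rows form `J - I`; hence
the `n` points are affinely independent.
-/

/-- `μ_h = a_1 + ⋯ + a_h` (as a real number). -/
noncomputable def mu (a : ℕ → ℕ) (h : ℕ) : ℝ := ∑ i ∈ Finset.Icc 1 h, (a i : ℝ)

/-- `λ = μ_t − b`, the excess weight of the cover. -/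
noncomputable def lam (a : ℕ → ℕ) (t b : ℕ) : ℝ := mu a t - (b : ℝ)

/-- `ρ_h = max(0, a_{h+1} − (a_1 − λ))`. -/
noncomputable def rho (a : ℕ → ℕ) (t b : ℕ) (h : ℕ) : ℝ :=
  max 0 ((a (h + 1) : ℝ) - ((a 1 : ℝ) - lam a t b))

/-- `w_k(x) = k·x + (1 − k·ρ₁)/2`, where `r` stands for `ρ₁`. -/
noncomputable def wk (r k x : ℝ) : ℝ := k * x + (1 - k * r) / 2

open Finset

section Mu

variable {a : ℕ → ℕ} {t : ℕ}

@[simp] lemma mu_zero (a : ℕ → ℕ) : mu a 0 = 0 := by simp [mu]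

lemma mu_succ (a : ℕ → ℕ) (h : ℕ) : mu a (h + 1) = mu a h + a (h + 1) :=
  sum_Icc_succ_top (by omega) _

lemma mu_one (a : ℕ → ℕ) : mu a 1 = a 1 := by simpa using mu_succ a 0

lemma mu_mono (a : ℕ → ℕ) : Monotone (mu a) := fun _ _ hpq =>
  sum_le_sum_of_subset_of_nonneg (Icc_subset_Icc_right hpq) fun _ _ _ => by positivity

lemma sum_Ioc_eq_mu_sub (a : ℕ → ℕ) {p q : ℕ} (hpq : p ≤ q) :
    ∑ i ∈ Ioc p q, (a i : ℝ) = mu a q - mu a p := by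
  have := sum_Ioc_consecutive (fun i => (a i : ℝ)) (Nat.zero_le p) hpq
  have hIcc : ∀ m, Icc 1 m = Ioc 0 m := Finset.Icc_add_one_left_eq_Ioc 0
  simp only [mu, hIcc]
  linarith

lemma mu_add_sub_mu_le (ha : AntitoneOn a (Set.Icc 1 t)) {p q r : ℕ} (hrp : r ≤ p)
    (hpq : p + q ≤ t) : mu a (p + q) - mu a p ≤ mu a (r + q) - mu a r := by
  induction q with
  | zero => simp
  | succ q ih =>
    have hle : (a (p + q + 1) : ℝ) ≤ a (r + q + 1) := by
      exact_mod_cast ha ⟨by omega, by omega⟩ ⟨by omega, by omega⟩ (by omega)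
    rw [← add_assoc, ← add_assoc, mu_succ, mu_succ]
    linarith [ih (by omega)]

lemma mu_add_le (ha : AntitoneOn a (Set.Icc 1 t)) {p q : ℕ} (hpq : p + q ≤ t) :
    mu a (p + q) ≤ mu a p + mu a q := by
  have := mu_add_sub_mu_le ha (Nat.zero_le p) hpq
  rw [zero_add, mu_zero] at this
  linarith

lemma sum_le_mu_card (ha : AntitoneOn a (Set.Icc 1 t)) {D : Finset ℕ} (hD : D ⊆ Icc 1 t) :
    ∑ i ∈ D, (a i : ℝ) ≤ mu a #D := by
  induction D using Finset.induction_on_max with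
  | empty => simp
  | insert m D hlt ih =>
    obtain ⟨hm1, hmt⟩ := mem_Icc.1 (hD (mem_insert_self m D))
    have hmD : m ∉ D := fun h => lt_irrefl m (hlt m h)
    have hcard : #D + 1 ≤ m := by
      have : D ⊆ Ico 1 m := fun x hx =>
        mem_Ico.2 ⟨(mem_Icc.1 (hD (mem_insert_of_mem hx))).1, hlt x hx⟩
      have := card_le_card this
      rw [Nat.card_Ico] at this
      omega
    have ham : (a m : ℝ) ≤ a (#D + 1) := by
      exact_mod_cast ha ⟨by omega, by omega⟩ ⟨hm1, hmt⟩ hcard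
    rw [sum_insert hmD, card_insert_of_notMem hmD, mu_succ]
    linarith [ih ((subset_insert m D).trans hD)]

end Mu

structure IsMinimalCover (a : ℕ → ℕ) (t b : ℕ) : Prop where
  antitoneOn : AntitoneOn a (Set.Icc 1 t)
  lt_mu : (b : ℝ) < mu a t
  mu_sub_le : mu a t - a t ≤ b

/-- `F_h` in the notation of the paper. -/
def fInterval (a : ℕ → ℕ) (t b h : ℕ) : Set ℝ :=
  Set.Ioc (mu a h - lam a t b + rho a t b h) (mu a (h + 1) - lam a t b)

/-- `S_h` in the notation of the paper. -/
def sInterval (a : ℕ → ℕ) (t b h : ℕ) : Set ℝ :=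
  Set.Ioc (mu a h - lam a t b) (mu a h - lam a t b + rho a t b h)

/-- The index `h` of the interval `F_h` or `S_h` containing `z`. -/
noncomputable def level (a : ℕ → ℕ) (t b : ℕ) (z : ℝ) : ℕ :=
  sInf {h | z ≤ mu a (h + 1) - lam a t b}

structure IsPCLifting (a : ℕ → ℕ) (t b : ℕ) (g : ℝ → ℝ) : Prop where
  eq_of_mem_fInterval : ∀ h ≤ t - 1, ∀ z ∈ fInterval a t b h, g z = h
  eq_of_mem_sInterval : ∀ h, 1 ≤ h → h ≤ t - 1 → ∀ z ∈ sInterval a t b h, g z = h - 1 / 2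

lemma mu_sub_lam (a : ℕ → ℕ) (t b : ℕ) : mu a t - lam a t b = b := by
  rw [lam]; ring

lemma rho_nonneg (a : ℕ → ℕ) (t b h : ℕ) : 0 ≤ rho a t b h := le_max_left _ _

lemma rho_eq_of_pos {a : ℕ → ℕ} {t b h : ℕ} (hρ : 0 < rho a t b h) :
    rho a t b h = a (h + 1) - a 1 + lam a t b := by
  rw [rho] at hρ ⊢
  rw [max_eq_right ((lt_max_iff.1 hρ).resolve_left (lt_irrefl 0)).le]
  ring

lemma add_two_mul_lam_le {a : ℕ → ℕ} {t b : ℕ} (h : rho a t b 1 ≤ mu a 1 - lam a t b) :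
    (a 2 : ℝ) + 2 * lam a t b ≤ 2 * a 1 := by
  have : (a 2 : ℝ) - (a 1 - lam a t b) ≤ rho a t b 1 := le_max_right _ _
  rw [mu_one] at h
  linarith

section Cover

variable {a : ℕ → ℕ} {t b : ℕ} (hC : IsMinimalCover a t b)
include hC

lemma IsMinimalCover.one_le : 1 ≤ t := by
  by_contra h
  have := hC.lt_mu
  rw [Nat.lt_one_iff.1 (not_le.1 h), mu_zero] at this
  exact (Nat.cast_nonneg b).not_gt this

lemma IsMinimalCover.lam_pos : 0 < lam a t b := sub_pos.2 hC.lt_mu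

lemma IsMinimalCover.lam_le {i : ℕ} (hi : 1 ≤ i) (hit : i ≤ t) : lam a t b ≤ a i := by
  have : (a t : ℝ) ≤ a i := by
    exact_mod_cast hC.antitoneOn ⟨hi, hit⟩ ⟨hi.trans hit, le_rfl⟩ hit
  linarith [hC.mu_sub_le, mu_sub_lam a t b]

lemma IsMinimalCover.rho_zero : rho a t b 0 = lam a t b := by
  rw [rho, max_eq_right] <;> linarith [hC.lam_pos]

lemma IsMinimalCover.one_le_of_mem_sInterval {h : ℕ} {z : ℝ} (hz : 0 < z)
    (hzS : z ∈ sInterval a t b h) : 1 ≤ h := by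
  by_contra h0
  rw [Nat.lt_one_iff.1 (not_le.1 h0), sInterval, mu_zero, hC.rho_zero] at hzS
  linarith [hzS.2]

lemma IsMinimalCover.level_spec {z : ℝ} (hz : 0 < z) (hzb : z ≤ b) :
    level a t b z ≤ t - 1 ∧
      (z ∈ fInterval a t b (level a t b z) ∨ z ∈ sInterval a t b (level a t b z)) := by
  have hmem : t - 1 ∈ {h | z ≤ mu a (h + 1) - lam a t b} := by
    rw [Set.mem_ofPred_eq, Nat.sub_add_cancel hC.one_le, mu_sub_lam]; exact hzb
  set h := level a t b z
  have hle : z ≤ mu a (h + 1) - lam a t b := Nat.sInf_mem ⟨_, hmem⟩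
  refine ⟨Nat.sInf_le hmem, ?_⟩
  have hgt : mu a h - lam a t b < z := by
    rcases Nat.eq_zero_or_pos h with h0 | hpos
    · rw [h0, mu_zero]; linarith [hC.lam_pos]
    · have : h - 1 ∉ {h | z ≤ mu a (h + 1) - lam a t b} :=
        Nat.notMem_of_lt_sInf (Nat.sub_lt hpos one_pos)
      rw [Set.mem_ofPred_eq, Nat.sub_add_cancel hpos] at this
      exact lt_of_not_ge this
  by_cases hS : z ≤ mu a h - lam a t b + rho a t b h
  · exact Or.inr ⟨hgt, hS⟩
  · exact Or.inl ⟨lt_of_not_ge hS, hle⟩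

lemma IsMinimalCover.mem_sInterval_level {z : ℝ} (hz : 0 < z) (hzb : z ≤ b)
    (hzF : ∀ h ≤ t - 1, z ∉ fInterval a t b h) :
    1 ≤ level a t b z ∧ level a t b z ≤ t - 1 ∧ z ∈ sInterval a t b (level a t b z) := by
  obtain ⟨hlev, hzF' | hzS⟩ := hC.level_spec hz hzb
  · exact absurd hzF' (hzF _ hlev)
  · exact ⟨hC.one_le_of_mem_sInterval hz hzS, hlev, hzS⟩

end Cover

def liftedCoeff (a : ℕ → ℕ) (t : ℕ) (g : ℝ → ℝ) (k : ℕ) : ℝ := if k ≤ t then 1 else g (a k)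

lemma liftedCoeff_of_le {a : ℕ → ℕ} {t k : ℕ} (g : ℝ → ℝ) (hk : k ≤ t) :
    liftedCoeff a t g k = 1 := if_pos hk

lemma liftedCoeff_of_lt {a : ℕ → ℕ} {t k : ℕ} (g : ℝ → ℝ) (hk : t < k) :
    liftedCoeff a t g k = g (a k) := if_neg (not_le.2 hk)

section Validity

variable {a : ℕ → ℕ} {t b : ℕ}

lemma lt_of_mu_sub_lam_lt {h s : ℕ} {z : ℝ} (hzh : mu a h - lam a t b < z)
    (hzs : z ≤ mu a s - lam a t b) : h < s :=
  (mu_mono a).reflect_lt (by linarith)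

lemma mu_sub_mu_le_of_mem_fInterval (ha : AntitoneOn a (Set.Icc 1 t)) {h s : ℕ} {z : ℝ}
    (hz : z ∈ fInterval a t b h) (hzF : mu a h ≤ z) (hzs : z ≤ mu a s - lam a t b)
    (hs : s ≤ t) : h < s ∧ mu a s - mu a (s - h) ≤ z := by
  have hhs : h < s := lt_of_mu_sub_lam_lt (by linarith [hz.1, rho_nonneg a t b h]) hzs
  refine ⟨hhs, ?_⟩
  have := mu_add_le ha (p := h) (q := s - h) (by omega)
  rw [Nat.add_sub_cancel' hhs.le] at this
  linarith

/-- This is where `ρ₁ ≤ μ₁ - λ`, in the form `a₂ + 2λ ≤ 2a₁`, enters. -/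
lemma IsMinimalCover.mu_sub_mu_le_of_mem_sInterval (hC : IsMinimalCover a t b)
    (hmain : (a 2 : ℝ) + 2 * lam a t b ≤ 2 * a 1) {h h' s : ℕ} {z z' : ℝ}
    (hz : z ∈ sInterval a t b h) (hz' : z' ∈ sInterval a t b h') (hh : 1 ≤ h) (hh' : 1 ≤ h')
    (hh't : h' ≤ t)
    (hzs : z + z' ≤ mu a s - lam a t b) (hs : s ≤ t) :
    h + h' - 1 < s ∧ mu a s - mu a (s - (h + h' - 1)) ≤ z + z' := by
  have ha := hC.antitoneOn
  have hlow : mu a h + mu a h' - 2 * lam a t b < z + z' := by linarith [hz.1, hz'.1]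
  have hlt : h + h' - 1 < s := by
    by_contra hsh
    set p := min s h
    have h1 : mu a s ≤ mu a p + mu a (s - p) := by
      have := mu_add_le ha (p := p) (q := s - p) (by omega)
      rwa [Nat.add_sub_cancel' (min_le_left s h)] at this
    have h2 : mu a p ≤ mu a h := mu_mono a (min_le_right s h)
    have h3 : mu a (s - p) ≤ mu a (h' - 1) := mu_mono a (by omega)
    have h4 : mu a h' = mu a (h' - 1) + a h' := by
      simpa [Nat.sub_add_cancel hh'] using mu_succ a (h' - 1)
    linarith [hC.lam_le hh' (by omega)]
  refine ⟨hlt, ?_⟩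
  have hw1 := mu_add_sub_mu_le ha (p := s - (h + h' - 1)) (q := h + h' - 1) (r := 1) (by omega)
    (by omega)
  have hw2 := mu_add_sub_mu_le ha (p := h) (q := h') (r := 1) hh (by omega)
  rw [Nat.sub_add_cancel (by omega), Nat.add_sub_cancel' (by omega)] at hw1
  have ha2 : (a (h' + 1) : ℝ) ≤ a 2 := by
    exact_mod_cast ha ⟨by omega, by omega⟩ ⟨by omega, by omega⟩ (by omega)
  rw [add_comm 1 h', mu_succ, mu_one] at hw2
  rw [mu_one] at hw1
  linarith

lemma IsMinimalCover.lift_le (hC : IsMinimalCover a t b) {g : ℝ → ℝ} (hg : IsPCLifting a t b g)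
    {z : ℝ} (hz : 0 < z) (hzb : z ≤ b) {s : ℕ} (hzs : z ≤ mu a s - lam a t b) : g z ≤ s - 1 := by
  obtain ⟨hht, hzFS⟩ := hC.level_spec hz hzb
  set h := level a t b z
  have hhs : h < s := by
    refine lt_of_mu_sub_lam_lt ?_ hzs
    rcases hzFS with hzF | hzS
    exacts [by linarith [hzF.1, rho_nonneg a t b h], hzS.1]
  have : (h : ℝ) + 1 ≤ s := by exact_mod_cast hhs
  rcases hzFS with hzF | hzS
  · rw [hg.eq_of_mem_fInterval h hht z hzF]; linarith
  · rw [hg.eq_of_mem_sInterval h (hC.one_le_of_mem_sInterval hz hzS) hht z hzS]; linarith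

theorem IsMinimalCover.sum_lift_le (hC : IsMinimalCover a t b)
    (hmain : (a 2 : ℝ) + 2 * lam a t b ≤ 2 * a 1) {g : ℝ → ℝ} (hg : IsPCLifting a t b g)
    {ι : Type*} (z : ι → ℝ) (U : Finset ι) (hz : ∀ i ∈ U, 0 < z i ∧ z i ≤ b)
    (hF : ∀ i ∈ U, ∀ h ≤ t - 1, z i ∈ fInterval a t b h → mu a h ≤ z i)
    {s : ℕ} (hs : 1 ≤ s) (hst : s ≤ t) (hU : ∑ i ∈ U, z i ≤ mu a s - lam a t b) :
    ∑ i ∈ U, g (z i) ≤ s - 1 := by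
  classical
  induction U using Finset.strongInduction generalizing s with
  | H U ih =>
  rcases U.eq_empty_or_nonempty with rfl | hne
  · simpa using hs
  by_cases hU1 : #U = 1
  · obtain ⟨i, rfl⟩ := card_eq_one.1 hU1
    rw [sum_singleton] at hU ⊢
    exact hC.lift_le hg (hz i (mem_singleton_self i)).1 (hz i (mem_singleton_self i)).2 hU
  have hsum_le : ∀ V ⊆ U, ∑ i ∈ V, z i ≤ mu a s - lam a t b := fun V hVU =>
    (sum_le_sum_of_subset_of_nonneg hVU fun i hi _ => (hz i hi).1.le).trans hU
  have reduce : ∀ V ⊆ U, V.Nonempty → ∀ m : ℕ, m < s → ∑ i ∈ V, g (z i) ≤ m →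
      mu a s - mu a (s - m) ≤ ∑ i ∈ V, z i → ∑ i ∈ U, g (z i) ≤ s - 1 := by
    intro V hVU hV m hms hgV hzV
    have hrest := ih (U \ V) (sdiff_ssubset hVU hV) (fun i hi => hz i (sdiff_subset hi))
      (fun i hi => hF i (sdiff_subset hi)) (s := s - m) (by omega) (by omega)
      (by linarith [sum_sdiff hVU (f := z)])
    rw [Nat.cast_sub hms.le] at hrest
    linarith [sum_sdiff hVU (f := fun i => g (z i))]
  by_cases hFex : ∃ i ∈ U, ∃ h ≤ t - 1, z i ∈ fInterval a t b h
  · obtain ⟨i, hi, h, hh, hzi⟩ := hFex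
    have hiU := hsum_le {i} (singleton_subset_iff.2 hi)
    rw [sum_singleton] at hiU
    obtain ⟨hhs, hbound⟩ :=
      mu_sub_mu_le_of_mem_fInterval hC.antitoneOn hzi (hF i hi h hh hzi) hiU hst
    exact reduce {i} (singleton_subset_iff.2 hi) (singleton_nonempty i) h hhs
      (by rw [sum_singleton, hg.eq_of_mem_fInterval h hh _ hzi]) (by rwa [sum_singleton])
  push Not at hFex
  have hU2 : 1 < #U := by have := hne.card_pos; omega
  obtain ⟨i, hi, i', hi', hne⟩ := one_lt_card.1 hU2
  obtain ⟨hh, hht, hzi⟩ := hC.mem_sInterval_level (hz i hi).1 (hz i hi).2 (hFex i hi)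
  obtain ⟨hh', hht', hzi'⟩ := hC.mem_sInterval_level (hz i' hi').1 (hz i' hi').2 (hFex i' hi')
  have hpair : {i, i'} ⊆ U := insert_subset hi (singleton_subset_iff.2 hi')
  have hiU := hsum_le _ hpair
  rw [sum_pair hne] at hiU
  obtain ⟨hlt, hbound⟩ := hC.mu_sub_mu_le_of_mem_sInterval hmain hzi hzi' hh hh'
    (hht'.trans (Nat.sub_le t 1)) hiU hst
  refine reduce _ hpair (insert_nonempty _ _) _ hlt ?_ (by rwa [sum_pair hne])
  rw [sum_pair hne, hg.eq_of_mem_sInterval _ hh hht _ hzi,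
    hg.eq_of_mem_sInterval _ hh' hht' _ hzi', Nat.cast_sub (by omega)]
  push_cast
  linarith

lemma sum_liftedCoeff_of_subset (a : ℕ → ℕ) (g : ℝ → ℝ) {K : Finset ℕ} (hK : ∀ k ∈ K, k ≤ t) :
    ∑ k ∈ K, liftedCoeff a t g k = #K := by
  rw [sum_congr rfl fun k hk => liftedCoeff_of_le g (hK k hk)]
  simp

theorem IsMinimalCover.sum_liftedCoeff_le (hC : IsMinimalCover a t b)
    (hmain : (a 2 : ℝ) + 2 * lam a t b ≤ 2 * a 1) {g : ℝ → ℝ} (hg : IsPCLifting a t b g) {n : ℕ}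
    (hpos : ∀ k, t + 1 ≤ k → k ≤ n → 0 < a k ∧ a k ≤ b)
    (hF : ∀ k, t + 1 ≤ k → k ≤ n → ∀ h ≤ t - 1, (a k : ℝ) ∈ fInterval a t b h → mu a h ≤ a k)
    {S : Finset ℕ} (hS : S ⊆ Icc 1 n) (hSb : ∑ k ∈ S, (a k : ℝ) ≤ b) :
    ∑ k ∈ S, liftedCoeff a t g k ≤ t - 1 := by
  classical
  set K := S.filter (· ≤ t)
  set U := S.filter (fun k => ¬k ≤ t)
  have hKU (f : ℕ → ℝ) : ∑ k ∈ K, f k + ∑ k ∈ U, f k = ∑ k ∈ S, f k :=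
    sum_filter_add_sum_filter_not S _ f
  have hK : K ⊆ Icc 1 t := fun k hk =>
    mem_Icc.2 ⟨(mem_Icc.1 (hS (mem_filter.1 hk).1)).1, (mem_filter.1 hk).2⟩
  have hU : ∀ k ∈ U, t + 1 ≤ k ∧ k ≤ n := fun k hk =>
    ⟨by simpa using (mem_filter.1 hk).2, (mem_Icc.1 (hS (mem_filter.1 hk).1)).2⟩
  have hcompl : ∑ k ∈ Icc 1 t \ K, (a k : ℝ) ≤ mu a (t - #K) := by
    have := sum_le_mu_card hC.antitoneOn (sdiff_subset (s := Icc 1 t) (t := K))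
    rwa [card_sdiff_of_subset hK, Nat.card_Icc, Nat.add_sub_cancel] at this
  have hKw : mu a t - mu a (t - #K) ≤ ∑ k ∈ K, (a k : ℝ) := by
    have : ∑ k ∈ Icc 1 t \ K, (a k : ℝ) + ∑ k ∈ K, (a k : ℝ) = mu a t := sum_sdiff hK
    linarith
  have hUnn : 0 ≤ ∑ k ∈ U, (a k : ℝ) := sum_nonneg fun k _ => by positivity
  have hKt : #K < t := by
    by_contra hKt
    rw [Nat.sub_eq_zero_of_le (not_lt.1 hKt), mu_zero] at hKw
    linarith [hKU fun k => (a k : ℝ), hC.lt_mu]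
  have hUg := hC.sum_lift_le hmain hg (fun k => (a k : ℝ)) U
    (fun k hk => by exact_mod_cast hpos k (hU k hk).1 (hU k hk).2)
    (fun k hk => hF k (hU k hk).1 (hU k hk).2) (s := t - #K) (by omega) (by omega)
    (by linarith [hKU fun k => (a k : ℝ), mu_sub_lam a t b])
  have hUc : ∑ k ∈ U, liftedCoeff a t g k = ∑ k ∈ U, g (a k) :=
    sum_congr rfl fun k hk => liftedCoeff_of_lt g (not_le.1 (mem_filter.1 hk).2)
  rw [← hKU, sum_liftedCoeff_of_subset a g fun k hk => (mem_filter.1 hk).2, hUc]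
  rw [Nat.cast_sub hKt.le] at hUg
  linarith

end Validity

/-- Items `1, …, n` sit at indices `0, …, n - 1`. -/
def incidence (n : ℕ) (S : Finset ℕ) : Fin n → ℝ := fun j => if (j : ℕ) + 1 ∈ S then 1 else 0

lemma incidence_eq_zero_or_one (n : ℕ) (S : Finset ℕ) (j : Fin n) :
    incidence n S j = 0 ∨ incidence n S j = 1 := by
  unfold incidence; split_ifs <;> simp

lemma incidence_nonneg (n : ℕ) (S : Finset ℕ) (j : Fin n) : 0 ≤ incidence n S j := by
  rcases incidence_eq_zero_or_one n S j with h | h <;> norm_num [h]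

lemma sum_mul_incidence {n : ℕ} {S : Finset ℕ} (hS : S ⊆ Icc 1 n) (f : ℕ → ℝ) :
    ∑ j : Fin n, f (j + 1) * incidence n S j = ∑ k ∈ S, f k := by
  classical
  simp only [incidence, mul_ite, mul_one, mul_zero]
  rw [Fin.sum_univ_eq_sum_range (fun j => if j + 1 ∈ S then f (j + 1) else 0), range_eq_Ico,
    sum_Ico_add' (fun j => if j ∈ S then f j else 0), sum_ite_mem, zero_add,
    Finset.Ico_add_one_right_eq_Icc, inter_eq_right.2 hS]

lemma exists_eq_incidence {n : ℕ} (x : Fin n → ℝ) (hx : ∀ j, x j = 0 ∨ x j = 1) :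
    ∃ S ⊆ Icc 1 n, x = incidence n S := by
  classical
  refine ⟨(univ.filter (x · = 1)).image (fun j : Fin n => (j : ℕ) + 1), ?_, ?_⟩
  · intro k hk
    obtain ⟨j, -, rfl⟩ := mem_image.1 hk
    simp [j.isLt]
  · funext j
    have hmem : (j : ℕ) + 1 ∈ (univ.filter (x · = 1)).image (fun j : Fin n => (j : ℕ) + 1) ↔
        x j = 1 := by
      simp [Fin.val_inj]
    rcases hx j with h | h <;> simp [incidence, hmem, h]

lemma eq_zero_of_cyclic {w₁ w₂ w₃ x y z : ℝ} (hx : 0 ≤ x) (hy : 0 ≤ y) (hz : 0 ≤ z)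
    (h₁ : w₁ * x + w₂ = 0) (h₂ : w₂ * y + w₃ = 0) (h₃ : w₃ * z + w₁ = 0) :
    w₁ = 0 ∧ w₂ = 0 ∧ w₃ = 0 := by
  -- the block `[[1, x, 0], [0, 1, y], [z, 0, 1]]` has determinant `1 + xyz > 0`
  have hdet : w₁ * (1 + x * y * z) = 0 := by linear_combination h₃ - z * h₂ + y * z * h₁
  have hw₁ : w₁ = 0 := (mul_eq_zero.1 hdet).resolve_right (by positivity)
  have hw₂ : w₂ = 0 := by linear_combination h₁ - x * hw₁
  exact ⟨hw₁, hw₂, by linear_combination h₂ - y * hw₂⟩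

lemma eq_zero_of_cover_column {ι : Type*} [Fintype ι] {p : ι → ι → ℝ} {c : ι → Prop}
    {w : ι → ℝ} (hc_self : ∀ i, c i → p i i = 0) (hc_cover : ∀ i k, c i → c k → k ≠ i → p i k = 1)
    (hw : ∑ i, w i = 0) (hnc : ∀ i, ¬c i → w i = 0) {k : ι} (hk : c k)
    (hcol : ∑ i, w i * p i k = 0) : w k = 0 := by
  classical
  -- column `k` sums the weights of all cover rows but `k`
  have hterm : ∀ i, w i * p i k = w i - if i = k then w i else 0 := by
    intro i
    by_cases hi : c i
    · by_cases hik : i = k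
      · simp [hik, hc_self k hk]
      · simp [hik, hc_cover i k hi hk (Ne.symm hik)]
    · simp [hnc i hi]
  simp only [hterm, sum_sub_distrib, sum_ite_eq', mem_univ, if_true, hw] at hcol
  linarith

theorem affineIndependent_of_cover_triple {ι : Type*} [Fintype ι] (p : ι → ι → ℝ) (c : ι → Prop)
    {j₁ j₂ j₃ : ι} (h₁₂ : j₁ ≠ j₂) (h₂₃ : j₂ ≠ j₃) (h₃₁ : j₃ ≠ j₁)
    (hc_self : ∀ i, c i → p i i = 0) (hc_cover : ∀ i k, c i → c k → k ≠ i → p i k = 1)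
    (hc_out : ∀ i k, c i → ¬c k → p i k = 0) (hself : ∀ i, ¬c i → p i i = 1)
    (hout : ∀ i k, ¬c i → ¬c k → k ≠ i → k ≠ j₁ → k ≠ j₂ → k ≠ j₃ → p i k = 0)
    (hj₁ : ¬c j₁) (hj₂ : ¬c j₂) (hj₃ : ¬c j₃)
    (h₁₃ : p j₁ j₃ = 0) (h₂₁ : p j₂ j₁ = 0) (h₃₂ : p j₃ j₂ = 0)
    (hnn₁₂ : 0 ≤ p j₁ j₂) (hnn₂₃ : 0 ≤ p j₂ j₃) (hnn₃₁ : 0 ≤ p j₃ j₁) :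
    AffineIndependent ℝ p := by
  classical
  rw [affineIndependent_iff_of_fintype]
  intro w hw hwp
  rw [weightedVSub_eq_linear_combination _ hw] at hwp
  have hcol (k : ι) : ∑ i, w i * p i k = 0 := by
    simpa using congrFun hwp k
  have hrest : ∀ k, ¬c k → k ≠ j₁ → k ≠ j₂ → k ≠ j₃ → w k = 0 := by
    intro k hk hk₁ hk₂ hk₃
    rw [← hcol k, sum_eq_single k (fun i _ hik => ?_) (by simp), hself k hk, mul_one]
    by_cases hi : c i
    · rw [hc_out i k hi hk, mul_zero]
    · rw [hout i k hi hk (Ne.symm hik) hk₁ hk₂ hk₃, mul_zero]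
  have hpair : ∀ i k l, i ≠ k → l ≠ i → l ≠ k → ¬c k → p l k = 0 →
      (∀ r, r ≠ i → r ≠ k → r ≠ l → ¬c r → w r = 0) → w i * p i k + w k = 0 := by
    intro i k l hik hli hlk hk hlk0 hzero
    rw [← hcol k, Fintype.sum_eq_add i k hik fun r ⟨hri, hrk⟩ => ?_, hself k hk, mul_one]
    by_cases hr : c r
    · rw [hc_out r k hr hk, mul_zero]
    by_cases hrl : r = l
    · rw [hrl, hlk0, mul_zero]
    · rw [hzero r hri hrk hrl hr, zero_mul]
  obtain ⟨hw₁, hw₂, hw₃⟩ := eq_zero_of_cyclic hnn₁₂ hnn₂₃ hnn₃₁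
    (hpair j₁ j₂ j₃ h₁₂ h₃₁ h₂₃.symm hj₂ h₃₂ fun r h₁ h₂ h₃ hr => hrest r hr h₁ h₂ h₃)
    (hpair j₂ j₃ j₁ h₂₃ h₁₂ h₃₁.symm hj₃ h₁₃ fun r h₂ h₃ h₁ hr => hrest r hr h₁ h₂ h₃)
    (hpair j₃ j₁ j₂ h₃₁ h₂₃ h₁₂.symm hj₁ h₂₁ fun r h₃ h₁ h₂ hr => hrest r hr h₁ h₂ h₃)
  have hnc : ∀ k, ¬c k → w k = 0 := by
    intro k hk
    by_cases h₁ : k = j₁; · rwa [h₁]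
    by_cases h₂ : k = j₂; · rwa [h₂]
    by_cases h₃ : k = j₃; · rwa [h₃]
    exact hrest k hk h₁ h₂ h₃
  intro k
  by_cases hk : c k
  · exact eq_zero_of_cover_column hc_self hc_cover hw hnc hk (hcol k)
  · exact hnc k hk

open Classical in
noncomputable def facetSupport (a : ℕ → ℕ) (t b : ℕ) (q j : ℕ) : Finset ℕ :=
  if j ≤ t then (Icc 1 t).erase j
  else if (a j : ℝ) ∈ sInterval a t b (level a t b (a j)) then
    insert j (insert q (Ioc (level a t b (a j) + 1) t))
  else insert j (Ioc (level a t b (a j) + 1) t)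

section Facet

variable {a : ℕ → ℕ} {t b : ℕ}

lemma facetSupport_of_le (q : ℕ) {j : ℕ} (hj : j ≤ t) :
    facetSupport a t b q j = (Icc 1 t).erase j := if_pos hj

lemma mem_facetSupport_self (q : ℕ) {j : ℕ} (hj : t < j) : j ∈ facetSupport a t b q j := by
  rw [facetSupport, if_neg (not_le.2 hj)]
  split_ifs <;> exact mem_insert_self _ _

lemma mem_facetSupport {q j k : ℕ} (hk : k ∈ facetSupport a t b q j) :
    k ∈ Icc 1 t ∨ k = j ∨ k = q := by
  have hIoc {p : ℕ} (hk : k ∈ Ioc (p + 1) t) : k ∈ Icc 1 t := by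
    rw [mem_Ioc] at hk; rw [mem_Icc]; omega
  unfold facetSupport at hk
  split_ifs at hk
  · exact Or.inl (mem_of_mem_erase hk)
  · simp only [mem_insert] at hk
    rcases hk with rfl | rfl | hk
    exacts [Or.inr (Or.inl rfl), Or.inr (Or.inr rfl), Or.inl (hIoc hk)]
  · rcases mem_insert.1 hk with rfl | hk
    exacts [Or.inr (Or.inl rfl), Or.inl (hIoc hk)]

lemma sum_Ioc_liftedCoeff (g : ℝ → ℝ) {p : ℕ} (hp : p ≤ t) :
    ∑ k ∈ Ioc p t, liftedCoeff a t g k = t - p := by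
  rw [sum_liftedCoeff_of_subset a g fun k hk => (mem_Ioc.1 hk).2, Nat.card_Ioc, Nat.cast_sub hp]

lemma IsMinimalCover.facetSupport_of_mem_cover (hC : IsMinimalCover a t b) (g : ℝ → ℝ)
    (q : ℕ) {j : ℕ} (hj : j ∈ Icc 1 t) :
    ∑ k ∈ facetSupport a t b q j, (a k : ℝ) ≤ b ∧
      ∑ k ∈ facetSupport a t b q j, liftedCoeff a t g k = t - 1 := by
  have hjt := (mem_Icc.1 hj).2
  rw [facetSupport_of_le q hjt]
  constructor
  · have := add_sum_erase (Icc 1 t) (fun k => (a k : ℝ)) hj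
    have hmu : mu a t = ∑ k ∈ Icc 1 t, (a k : ℝ) := rfl
    linarith [hC.lam_le (mem_Icc.1 hj).1 hjt, mu_sub_lam a t b]
  · rw [sum_liftedCoeff_of_subset a g fun k hk => (mem_Icc.1 (mem_of_mem_erase hk)).2,
      card_erase_of_mem hj, Nat.card_Icc, Nat.add_sub_cancel, Nat.cast_sub hC.one_le, Nat.cast_one]

/-- For `a j ∈ S_h` the partner `q ∈ S_1` supplies the missing half: the hypotheses
`a j ≤ μ_h - λ + ρ_h - ρ₁/2` and `a q ≤ μ₁ - λ + ρ₁ - ρ₁/2` add up to exactly the capacity. -/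
lemma IsMinimalCover.facetSupport_of_lt (hC : IsMinimalCover a t b) (ht : 2 ≤ t) {g : ℝ → ℝ}
    (hg : IsPCLifting a t b g) {q j : ℕ} (hj : t < j) (hjpos : 0 < a j) (hjb : a j ≤ b)
    (hjS : ∀ h, 1 ≤ h → h ≤ t - 1 → (a j : ℝ) ∈ sInterval a t b h →
      rho a t b 1 / 2 < rho a t b h ∧
      (a j : ℝ) ≤ mu a h - lam a t b + rho a t b h - rho a t b 1 / 2)
    (hq : t < q) (hqj : q ≠ j) (hqS : (a q : ℝ) ∈ sInterval a t b 1)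
    (hqS' : (a q : ℝ) ≤ mu a 1 - lam a t b + rho a t b 1 - rho a t b 1 / 2) :
    ∑ k ∈ facetSupport a t b q j, (a k : ℝ) ≤ b ∧
      ∑ k ∈ facetSupport a t b q j, liftedCoeff a t g k = t - 1 := by
  have hjpos' : (0 : ℝ) < a j := by exact_mod_cast hjpos
  obtain ⟨hht, hjFS⟩ := hC.level_spec hjpos' (by exact_mod_cast hjb)
  rw [facetSupport, if_neg (not_le.2 hj)]
  set h := level a t b (a j)
  have hT : ∑ k ∈ Ioc (h + 1) t, (a k : ℝ) = mu a t - mu a (h + 1) :=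
    sum_Ioc_eq_mu_sub a (by omega)
  have hTc : ∑ k ∈ Ioc (h + 1) t, liftedCoeff a t g k = t - (h + 1 : ℕ) :=
    sum_Ioc_liftedCoeff g (by omega)
  have hjT : j ∉ Ioc (h + 1) t := fun hk => by rw [mem_Ioc] at hk; omega
  split_ifs with hS
  · have hqT : q ∉ Ioc (h + 1) t := fun hk => by rw [mem_Ioc] at hk; omega
    have hjqT : j ∉ insert q (Ioc (h + 1) t) := by simp [hjT, Ne.symm hqj]
    have hh1 := hC.one_le_of_mem_sInterval hjpos' hS
    obtain ⟨hρ, hjle⟩ := hjS h hh1 hht hS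
    rw [sum_insert hjqT, sum_insert hqT, sum_insert hjqT, sum_insert hqT, hT, hTc,
      liftedCoeff_of_lt g hj, liftedCoeff_of_lt g hq, hg.eq_of_mem_sInterval h hh1 hht _ hS,
      hg.eq_of_mem_sInterval 1 le_rfl (by omega) _ hqS]
    refine ⟨?_, by push_cast; ring⟩
    rw [rho_eq_of_pos (by linarith [rho_nonneg a t b 1])] at hjle
    rw [mu_one] at hqS'
    linarith [mu_succ a h, mu_sub_lam a t b]
  · have hjF := hjFS.resolve_right hS
    rw [sum_insert hjT, sum_insert hjT, hT, hTc, liftedCoeff_of_lt g hj,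
      hg.eq_of_mem_fInterval h hht _ hjF]
    refine ⟨?_, by push_cast; ring⟩
    linarith [hjF.2, mu_sub_lam a t b]

lemma exists_fin_triple {n : ℕ} {P : ℕ → Prop} [DecidablePred P]
    (h : 3 ≤ #((Icc (t + 1) n).filter P)) :
    ∃ i₁ i₂ i₃ : Fin n, i₁ ≠ i₂ ∧ i₂ ≠ i₃ ∧ i₃ ≠ i₁ ∧
      (t ≤ i₁ ∧ P (i₁ + 1)) ∧ (t ≤ i₂ ∧ P (i₂ + 1)) ∧ (t ≤ i₃ ∧ P (i₃ + 1)) := by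
  have hfin : ∀ k ∈ (Icc (t + 1) n).filter P, ∃ i : Fin n, (i : ℕ) + 1 = k ∧ t ≤ i ∧ P (i + 1) := by
    intro k hk
    obtain ⟨hk, hPk⟩ := mem_filter.1 hk
    rw [mem_Icc] at hk
    exact ⟨⟨k - 1, by omega⟩, by simp; omega, by simp; omega,
      by simpa [Nat.sub_add_cancel (by omega : 1 ≤ k)]⟩
  obtain ⟨x, hx, y, hy, z, hz, hxy, hxz, hyz⟩ := two_lt_card.1 h
  obtain ⟨i₁, rfl, hi₁⟩ := hfin x hx
  obtain ⟨i₂, rfl, hi₂⟩ := hfin y hy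
  obtain ⟨i₃, rfl, hi₃⟩ := hfin z hz
  exact ⟨i₁, i₂, i₃, fun h => hxy (by rw [h]), fun h => hyz (by rw [h]),
    fun h => hxz (by rw [h]), hi₁, hi₂, hi₃⟩

lemma affineIndependent_facetSupport {n : ℕ} (σ : Fin n → Fin n) {i₁ i₂ i₃ : Fin n}
    (h₁₂ : i₁ ≠ i₂) (h₂₃ : i₂ ≠ i₃) (h₃₁ : i₃ ≠ i₁) (hi₁ : t ≤ i₁) (hi₂ : t ≤ i₂) (hi₃ : t ≤ i₃)
    (hσ : ∀ i, σ i = i₁ ∨ σ i = i₂ ∨ σ i = i₃)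
    (hσ₁ : σ i₁ = i₂) (hσ₂ : σ i₂ = i₃) (hσ₃ : σ i₃ = i₁) :
    AffineIndependent ℝ fun i : Fin n => incidence n (facetSupport a t b (σ i + 1) (i + 1)) := by
  set F : Fin n → Finset ℕ := fun i => facetSupport a t b (σ i + 1) (i + 1)
  have hFout : ∀ i k : Fin n, t ≤ k → k ≠ i → k ≠ σ i → incidence n (F i) k = 0 := by
    intro i k hk hki hkσ
    refine if_neg fun hkF => ?_
    rcases mem_facetSupport hkF with hk' | hk' | hk'
    · rw [mem_Icc] at hk'; omega
    · exact hki (Fin.ext (by omega))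
    · exact hkσ (Fin.ext (by omega))
  exact affineIndependent_of_cover_triple _ (fun i : Fin n => (i : ℕ) + 1 ≤ t) h₁₂ h₂₃ h₃₁
    (fun i hi => if_neg (by simp [facetSupport_of_le _ hi]))
    (fun i k hi hk hki => if_pos (by simp [facetSupport_of_le _ hi, hk, Fin.val_ne_of_ne hki]))
    (fun i k hi hk => if_neg (by simp [facetSupport_of_le _ hi, hk]))
    (fun i hi => if_pos (mem_facetSupport_self _ (by omega)))
    (fun i k hi hk hki h₁ h₂ h₃ => hFout i k (by omega) hki
      (by rcases hσ i with h | h | h <;> rw [h] <;> assumption))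
    (by omega) (by omega) (by omega)
    (hFout i₁ i₃ hi₃ h₃₁ (hσ₁ ▸ h₂₃.symm)) (hFout i₂ i₁ hi₁ h₁₂ (hσ₂ ▸ h₃₁.symm))
    (hFout i₃ i₂ hi₂ h₂₃ (hσ₃ ▸ h₁₂.symm)) (incidence_nonneg ..) (incidence_nonneg ..)
    (incidence_nonneg ..)

theorem IsMinimalCover.exists_affineIndependent_tight (hC : IsMinimalCover a t b) (ht : 2 ≤ t)
    {g : ℝ → ℝ} (hg : IsPCLifting a t b g) {n : ℕ}
    (hpos : ∀ k, t + 1 ≤ k → k ≤ n → 0 < a k ∧ a k ≤ b)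
    (hS : ∀ k, t + 1 ≤ k → k ≤ n → ∀ h, 1 ≤ h → h ≤ t - 1 → (a k : ℝ) ∈ sInterval a t b h →
      rho a t b 1 / 2 < rho a t b h ∧
      (a k : ℝ) ≤ mu a h - lam a t b + rho a t b h - rho a t b 1 / 2)
    {i₁ i₂ i₃ : Fin n} (h₁₂ : i₁ ≠ i₂) (h₂₃ : i₂ ≠ i₃) (h₃₁ : i₃ ≠ i₁)
    (hi₁ : t ≤ i₁ ∧ (a (i₁ + 1) : ℝ) ∈ sInterval a t b 1)
    (hi₂ : t ≤ i₂ ∧ (a (i₂ + 1) : ℝ) ∈ sInterval a t b 1)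
    (hi₃ : t ≤ i₃ ∧ (a (i₃ + 1) : ℝ) ∈ sInterval a t b 1) :
    ∃ xs : Fin n → Fin n → ℝ, AffineIndependent ℝ xs ∧ ∀ i, (∀ j, xs i j = 0 ∨ xs i j = 1) ∧
      ∑ j : Fin n, (a (j + 1) : ℝ) * xs i j ≤ b ∧
      ∑ j : Fin n, liftedCoeff a t g (j + 1) * xs i j = t - 1 := by
  classical
  let σ : Fin n → Fin n := fun i => if i = i₁ then i₂ else if i = i₂ then i₃ else i₁
  have hσ : ∀ i, σ i ≠ i ∧ t ≤ σ i ∧ (a (σ i + 1) : ℝ) ∈ sInterval a t b 1 := by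
    intro i
    simp only [σ]
    split_ifs with h₁ h₂
    exacts [⟨h₁ ▸ h₁₂.symm, hi₂⟩, ⟨h₂ ▸ h₂₃.symm, hi₃⟩, ⟨Ne.symm h₁, hi₁⟩]
  have hσ_mem : ∀ i, σ i = i₁ ∨ σ i = i₂ ∨ σ i = i₃ := by
    intro i; simp only [σ]; split_ifs <;> simp
  refine ⟨fun i => incidence n (facetSupport a t b (σ i + 1) (i + 1)),
    affineIndependent_facetSupport σ h₁₂ h₂₃ h₃₁ hi₁.1 hi₂.1 hi₃.1 hσ_mem (by simp [σ])
      (by simp [σ, h₁₂.symm]) (by simp [σ, h₃₁, h₂₃.symm]),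
    fun i => ⟨incidence_eq_zero_or_one n _, ?_⟩⟩
  have hσn := (σ i).isLt
  have hin := i.isLt
  have hF : facetSupport a t b (σ i + 1) (i + 1) ⊆ Icc 1 n := by
    intro k hk
    rcases mem_facetSupport hk with hk | rfl | rfl
    · exact Icc_subset_Icc_right (by have := i₁.isLt; omega) hk
    all_goals simp
  rw [sum_mul_incidence hF (fun k => (a k : ℝ)), sum_mul_incidence hF]
  by_cases hi : (i : ℕ) + 1 ≤ t
  · exact hC.facetSupport_of_mem_cover g _ (mem_Icc.2 ⟨by omega, hi⟩)
  obtain ⟨hσi, hσt, hσS⟩ := hσ i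
  exact hC.facetSupport_of_lt ht hg (by omega) (hpos _ (by omega) (by omega)).1
    (hpos _ (by omega) (by omega)).2 (hS _ (by omega) (by omega)) (by omega)
    (fun h => hσi (Fin.ext (by omega))) hσS
    (hS _ (by omega) (by omega) 1 le_rfl (by omega) hσS).2

end Facet

theorem pc_lifting_facet_defining_general
    (t n b : ℕ) (a : ℕ → ℕ) (gPC : ℝ → ℝ)
    (ht : 2 ≤ t)
    (hmono : ∀ i j, 1 ≤ i → i ≤ j → j ≤ t → a j ≤ a i)
    (hcover : (b : ℝ) < mu a t)
    (hmin : mu a t - (a t : ℝ) ≤ (b : ℝ))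
    (hposn : ∀ i, 1 ≤ i → i ≤ n → 0 < a i)
    (halb : ∀ i, 1 ≤ i → i ≤ n → a i ≤ b)
    (hmain : rho a t b 1 ≤ mu a 1 - lam a t b)
    (hPF : ∀ h : ℕ, h ≤ t - 1 → ∀ z : ℝ,
      mu a h - lam a t b + rho a t b h < z → z ≤ mu a (h + 1) - lam a t b →
      gPC z = (h : ℝ))
    (hPS : ∀ h : ℕ, 1 ≤ h → h ≤ t - 1 → ∀ z : ℝ,
      mu a h - lam a t b < z → z ≤ mu a h - lam a t b + rho a t b h →
      gPC z = (h : ℝ) - 1 / 2)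
    (hthree : 3 ≤ ((Finset.Icc (t + 1) n).filter (fun j =>
      mu a 1 - lam a t b < (a j : ℝ) ∧
      (a j : ℝ) ≤ mu a 1 - lam a t b + rho a t b 1)).card)
    (hScond : ∀ j, t + 1 ≤ j → j ≤ n → ∀ h : ℕ, 1 ≤ h → h ≤ t - 1 →
      mu a h - lam a t b < (a j : ℝ) →
      (a j : ℝ) ≤ mu a h - lam a t b + rho a t b h →
      rho a t b 1 / 2 < rho a t b h ∧
      (a j : ℝ) ≤ mu a h - lam a t b + rho a t b h - rho a t b 1 / 2)
    (hFcond : ∀ j, t + 1 ≤ j → j ≤ n → ∀ h : ℕ, h ≤ t - 1 →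
      mu a h - lam a t b + rho a t b h < (a j : ℝ) →
      (a j : ℝ) ≤ mu a (h + 1) - lam a t b →
      mu a h ≤ (a j : ℝ)) :
    (∀ x : Fin n → ℝ, (∀ j, x j = 0 ∨ x j = 1) →
      (∑ j : Fin n, (a ((j : ℕ) + 1) : ℝ) * x j) ≤ (b : ℝ) →
      (∑ j : Fin n,
        (if (j : ℕ) + 1 ≤ t then 1 else gPC (a ((j : ℕ) + 1))) * x j) ≤ (t : ℝ) - 1) ∧
    (∃ xs : Fin n → (Fin n → ℝ), AffineIndependent ℝ xs ∧
      ∀ i : Fin n, (∀ j, xs i j = 0 ∨ xs i j = 1) ∧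
        (∑ j : Fin n, (a ((j : ℕ) + 1) : ℝ) * xs i j) ≤ (b : ℝ) ∧
        (∑ j : Fin n,
          (if (j : ℕ) + 1 ≤ t then 1 else gPC (a ((j : ℕ) + 1))) * xs i j)
            = (t : ℝ) - 1) := by
  have hC : IsMinimalCover a t b := ⟨fun i hi j hj hij => hmono i j hi.1 hij hj.2, hcover, hmin⟩
  have hg : IsPCLifting a t b gPC :=
    ⟨fun h hh z hz => hPF h hh z hz.1 hz.2, fun h h₁ h₂ z hz => hPS h h₁ h₂ z hz.1 hz.2⟩
  have hpos : ∀ k, t + 1 ≤ k → k ≤ n → 0 < a k ∧ a k ≤ b := fun k hk hkn =>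
    ⟨hposn k (by omega) hkn, halb k (by omega) hkn⟩
  refine ⟨fun x hx hxb => ?_, ?_⟩
  · obtain ⟨S, hS, rfl⟩ := exists_eq_incidence x hx
    rw [sum_mul_incidence hS (fun k => (a k : ℝ))] at hxb
    exact (sum_mul_incidence hS (liftedCoeff a t gPC)).trans_le
      (hC.sum_liftedCoeff_le (add_two_mul_lam_le hmain) hg hpos
        (fun k hk hkn h hh hz => hFcond k hk hkn h hh hz.1 hz.2) hS hxb)
  · obtain ⟨i₁, i₂, i₃, h₁₂, h₂₃, h₃₁, hi₁, hi₂, hi₃⟩ := exists_fin_triple hthree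
    exact hC.exists_affineIndependent_tight ht hg hpos
      (fun k hk hkn h h₁ h₂ hz => hScond k hk hkn h h₁ h₂ hz.1 hz.2) h₁₂ h₂₃ h₃₁ hi₁ hi₂ hi₃

/-- Under the stated sufficient conditions, the PC-lifted cover
inequality is valid for `P` and defines a facet of `conv(P)`: it is satisfied by
every point of `P`, and there exist `n` affinely independent points of `P`
satisfying it with equality. -/
theorem pc_lifting_facet_defining
    (t n b : ℕ) (a : ℕ → ℕ) (gPC : ℝ → ℝ)
    (ht : 2 ≤ t)
    (hpos : ∀ i, 1 ≤ i → i ≤ t → 0 < a i)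
    (hmono : ∀ i j, 1 ≤ i → i ≤ j → j ≤ t → a j ≤ a i)
    (hcover : (b : ℝ) < mu a t)
    (hmin : mu a t - (a t : ℝ) ≤ (b : ℝ))
    (hrho1 : 0 < rho a t b 1)
    (htn : t < n)
    (hposn : ∀ i, 1 ≤ i → i ≤ n → 0 < a i)
    (halb : ∀ i, 1 ≤ i → i ≤ n → a i ≤ b)
    (hmain : rho a t b 1 ≤ mu a 1 - lam a t b)
    (hP0 : gPC 0 = 0)
    (hPF : ∀ h : ℕ, h ≤ t - 1 → ∀ z : ℝ,
      mu a h - lam a t b + rho a t b h < z → z ≤ mu a (h + 1) - lam a t b →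
      gPC z = (h : ℝ))
    (hPS : ∀ h : ℕ, 1 ≤ h → h ≤ t - 1 → ∀ z : ℝ,
      mu a h - lam a t b < z → z ≤ mu a h - lam a t b + rho a t b h →
      gPC z = (h : ℝ) - 1 / 2)
    (hthree : 3 ≤ ((Finset.Icc (t + 1) n).filter (fun j =>
      mu a 1 - lam a t b < (a j : ℝ) ∧
      (a j : ℝ) ≤ mu a 1 - lam a t b + rho a t b 1)).card)
    (hScond : ∀ j, t + 1 ≤ j → j ≤ n → ∀ h : ℕ, 1 ≤ h → h ≤ t - 1 →
      mu a h - lam a t b < (a j : ℝ) →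
      (a j : ℝ) ≤ mu a h - lam a t b + rho a t b h →
      rho a t b 1 / 2 < rho a t b h ∧
      (a j : ℝ) ≤ mu a h - lam a t b + rho a t b h - rho a t b 1 / 2)
    (hFcond : ∀ j, t + 1 ≤ j → j ≤ n → ∀ h : ℕ, h ≤ t - 1 →
      mu a h - lam a t b + rho a t b h < (a j : ℝ) →
      (a j : ℝ) ≤ mu a (h + 1) - lam a t b →
      mu a h ≤ (a j : ℝ)) :
    (∀ x : Fin n → ℝ, (∀ j, x j = 0 ∨ x j = 1) →
      (∑ j : Fin n, (a ((j : ℕ) + 1) : ℝ) * x j) ≤ (b : ℝ) →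
      (∑ j : Fin n,
        (if (j : ℕ) + 1 ≤ t then 1 else gPC (a ((j : ℕ) + 1))) * x j) ≤ (t : ℝ) - 1) ∧
    (∃ xs : Fin n → (Fin n → ℝ), AffineIndependent ℝ xs ∧
      ∀ i : Fin n, (∀ j, xs i j = 0 ∨ xs i j = 1) ∧
        (∑ j : Fin n, (a ((j : ℕ) + 1) : ℝ) * xs i j) ≤ (b : ℝ) ∧
        (∑ j : Fin n,
          (if (j : ℕ) + 1 ≤ t then 1 else gPC (a ((j : ℕ) + 1))) * xs i j)
            = (t : ℝ) - 1) :=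
  pc_lifting_facet_defining_general t n b a gPC ht hmono hcover hmin hposn halb hmain hPF hPS hthree
    hScond hFcond
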